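/- arXiv:1507.00053 — 2 statements merged into one kernel-verified Lean document; each statement's English description precedes it below -/
import Mathlib

section
/- Let n and k be integers with 0 < k and 2k < n. There exists a constant c > 0, depending only on n and k, such that for every ε ∈ (0, ((n−2k)/n)^(1/(2k))), every Delaunay solution v with necksize ε, and every t ≥ 0: 0 ≤ ε^((n−2k)/(2k)) · cosh(((n−2k)/(2k)) t) − v(t) ≤ c · ε^((n+2k)/(2k)) · exp(((n+2k)/(2k)) t). -/
open Real

/-- The Delaunay ODE for the σₖ-curvature problem:
`(v² − (2k/(n−2k))² v'²)^(k−1) · (v − (2k/(n−2k))² v'') = (n/(n−2k)) · v^(2kn/(n−2k) − 1)`. -/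
def DelaunayODE (n k : ℤ) (v : ℝ → ℝ) : Prop :=
  ∀ t : ℝ,
    (v t ^ 2 - (2 * (k : ℝ) / ((n : ℝ) - 2 * k)) ^ 2 * deriv v t ^ 2) ^ (k.toNat - 1) *
        (v t - (2 * (k : ℝ) / ((n : ℝ) - 2 * k)) ^ 2 * deriv (deriv v) t) =
      (n : ℝ) / ((n : ℝ) - 2 * k) * v t ^ (2 * (k : ℝ) * n / ((n : ℝ) - 2 * k) - 1)

/-- The Hamiltonian `H(v,w) = (v² − (2k/(n−2k))² w²)^k − v^(2kn/(n−2k))`. -/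
noncomputable def Ham (n k : ℤ) (v w : ℝ) : ℝ :=
  (v ^ 2 - (2 * (k : ℝ) / ((n : ℝ) - 2 * k)) ^ 2 * w ^ 2) ^ k.toNat -
    v ^ (2 * (k : ℝ) * n / ((n : ℝ) - 2 * k))

/-- A Delaunay solution with necksize `ε`. -/
def IsDelaunay (n k : ℤ) (ε : ℝ) (v : ℝ → ℝ) : Prop :=
  ContDiff ℝ 2 v ∧ DelaunayODE n k v ∧ deriv v 0 = 0 ∧
    v 0 = ε ^ (((n : ℝ) - 2 * k) / (2 * k)) ∧
    ∀ t : ℝ, ε ^ (((n : ℝ) - 2 * k) / (2 * k)) ≤ v t ∧ v t ≤ 1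


/-! Write `α = (n - 2k)/(2k)`, `γ = (n + 2k)/(2k) = α + 2`, `P = v² - v'²/α²` and
`R = v - v''/α²`, so that the ODE reads `P^(k-1) R = (n/(n-2k)) v^(2kn/(n-2k) - 1)`.
The Hamiltonian `P^k - v^(2kn/(n-2k))` is conserved and nonnegative at `t = 0` because
`v(0) ≤ 1`; hence `P ≥ v^(2n/(n-2k)) > 0`, and the ODE gives
`0 < R ≤ (n/(n-2k)) v^((n+2k)/(n-2k))`.

The defect `f = ε^α cosh(α t) - v` solves `f'' = α² f + α² R` with `f(0) = f'(0) = 0`.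
Factoring `∂² - α² = (∂ + α)(∂ - α)` and integrating each first-order factor against
`e^(±α t)` turns a sign or an exponential bound on `R` into one on `f`. First `R > 0` gives
`f ≥ 0`, i.e. `v ≤ ε^α e^(α t)`; fed back into the bound on `R` this gives
`α² R ≤ α² (n/(n-2k)) ε^γ e^(γ t)`, and the second pass bounds `f` by
`(α/4) ε^γ e^(γ t)`. -/

open Set

section LinearComparison

variable {g h : ℝ → ℝ} {a : ℝ}

theorem hasDerivAt_exp_neg_mul_mul (hg : ∀ s, HasDerivAt g (a * g s + h s) s) (s : ℝ) :
    HasDerivAt (fun s => exp (-a * s) * g s) (exp (-a * s) * h s) s :=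
  (((hasDerivAt_id' s).const_mul (-a)).exp.mul (hg s)).congr_deriv (by ring)

theorem nonneg_of_hasDerivAt_eq_mul_add (hg : ∀ s, HasDerivAt g (a * g s + h s) s)
    (hg0 : g 0 = 0) (hh : ∀ s, 0 ≤ s → 0 ≤ h s) {t : ℝ} (ht : 0 ≤ t) : 0 ≤ g t := by
  have hmono : MonotoneOn (fun s => exp (-a * s) * g s) (Ici 0) :=
    monotoneOn_of_hasDerivWithinAt_nonneg (convex_Ici 0)
      (fun s _ => (hasDerivAt_exp_neg_mul_mul hg s).continuousAt.continuousWithinAt)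
      (fun s _ => (hasDerivAt_exp_neg_mul_mul hg s).hasDerivWithinAt)
      (fun s hs => mul_nonneg (exp_pos _).le (hh s (interior_subset hs)))
  have h0t := hmono self_mem_Ici ht ht
  simp only [mul_zero, exp_zero, hg0] at h0t
  exact nonneg_of_mul_nonneg_right h0t (exp_pos _)

theorem le_mul_exp_of_hasDerivAt_eq_mul_add (hg : ∀ s, HasDerivAt g (a * g s + h s) s)
    (hg0 : g 0 = 0) {B b : ℝ} (hB : 0 ≤ B) (hab : a < b)
    (hh : ∀ s, 0 ≤ s → h s ≤ B * exp (b * s)) {t : ℝ} (ht : 0 ≤ t) :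
    g t ≤ B / (b - a) * exp (b * t) := by
  have hba : 0 < b - a := sub_pos.mpr hab
  set ψ : ℝ → ℝ := fun s => B / (b - a) * exp ((b - a) * s) - exp (-a * s) * g s
  have hψ : ∀ s, HasDerivAt ψ (B * exp ((b - a) * s) - exp (-a * s) * h s) s := fun s =>
    ((((hasDerivAt_id' s).const_mul (b - a)).exp.const_mul (B / (b - a))).sub
      (hasDerivAt_exp_neg_mul_mul hg s)).congr_deriv (by field_simp)
  have hmono : MonotoneOn ψ (Ici 0) := by
    refine monotoneOn_of_hasDerivWithinAt_nonneg (convex_Ici 0)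
      (fun s _ => (hψ s).continuousAt.continuousWithinAt)
      (fun s _ => (hψ s).hasDerivWithinAt) (fun s hs => sub_nonneg.mpr ?_)
    calc exp (-a * s) * h s ≤ exp (-a * s) * (B * exp (b * s)) :=
          mul_le_mul_of_nonneg_left (hh s (interior_subset hs)) (exp_pos _).le
      _ = B * exp ((b - a) * s) := by rw [mul_left_comm, ← exp_add]; ring_nf
  have h0t := hmono self_mem_Ici ht ht
  simp only [ψ, mul_zero, exp_zero, hg0, mul_one, sub_zero] at h0t
  calc g t = exp (a * t) * (exp (-a * t) * g t) := by
        rw [← mul_assoc, ← exp_add, neg_mul, add_neg_cancel, exp_zero, one_mul]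
    _ ≤ exp (a * t) * (B / (b - a) * exp ((b - a) * t)) := by
        refine mul_le_mul_of_nonneg_left ?_ (exp_pos _).le
        linarith [div_nonneg hB hba.le]
    _ = B / (b - a) * exp (b * t) := by
        rw [mul_left_comm, ← exp_add]; ring_nf

variable {f f' : ℝ → ℝ}

theorem hasDerivAt_sub_mul_of_hasDerivAt_eq_sq_mul_add (hf : ∀ s, HasDerivAt f (f' s) s)
    (hf' : ∀ s, HasDerivAt f' (a ^ 2 * f s + h s) s) (s : ℝ) :
    HasDerivAt (fun s => f' s - a * f s) (-a * (f' s - a * f s) + h s) s :=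
  ((hf' s).sub ((hf s).const_mul a)).congr_deriv (by ring)

theorem nonneg_of_hasDerivAt_eq_sq_mul_add (hf : ∀ s, HasDerivAt f (f' s) s)
    (hf' : ∀ s, HasDerivAt f' (a ^ 2 * f s + h s) s) (hf0 : f 0 = 0) (hf'0 : f' 0 = 0)
    (hh : ∀ s, 0 ≤ s → 0 ≤ h s) {t : ℝ} (ht : 0 ≤ t) : 0 ≤ f t := by
  have hu : ∀ s, 0 ≤ s → 0 ≤ f' s - a * f s := fun s hs =>
    nonneg_of_hasDerivAt_eq_mul_add (hasDerivAt_sub_mul_of_hasDerivAt_eq_sq_mul_add hf hf')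
      (by simp [hf0, hf'0]) hh hs
  exact nonneg_of_hasDerivAt_eq_mul_add (fun s => (hf s).congr_deriv (by ring)) hf0 hu ht

theorem le_mul_exp_of_hasDerivAt_eq_sq_mul_add (hf : ∀ s, HasDerivAt f (f' s) s)
    (hf' : ∀ s, HasDerivAt f' (a ^ 2 * f s + h s) s) (hf0 : f 0 = 0) (hf'0 : f' 0 = 0)
    {B b : ℝ} (hB : 0 ≤ B) (hab : |a| < b) (hh : ∀ s, 0 ≤ s → h s ≤ B * exp (b * s))
    {t : ℝ} (ht : 0 ≤ t) : f t ≤ B / ((b + a) * (b - a)) * exp (b * t) := by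
  have hba : 0 < b + a := by linarith [neg_abs_le a]
  have hu : ∀ s, 0 ≤ s → f' s - a * f s ≤ B / (b + a) * exp (b * s) := fun s hs =>
    le_mul_exp_of_hasDerivAt_eq_mul_add (hasDerivAt_sub_mul_of_hasDerivAt_eq_sq_mul_add hf hf')
      (by simp [hf0, hf'0]) hB (by linarith) hh hs |>.trans_eq (by rw [sub_neg_eq_add])
  rw [← div_div]
  exact le_mul_exp_of_hasDerivAt_eq_mul_add (fun s => (hf s).congr_deriv (by ring)) hf0
    (div_nonneg hB hba.le) (lt_of_le_of_lt (le_abs_self a) hab) hu ht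

end LinearComparison

theorem Int.cast_toNat_of_nonneg {R : Type*} [Ring R] {k : ℤ} (hk : 0 ≤ k) :
    ((k.toNat : ℕ) : R) = k := by
  rw [← Int.cast_natCast, Int.toNat_of_nonneg hk]

theorem Continuous.pos_of_forall_ne_zero {f : ℝ → ℝ} (hf : Continuous f)
    (hf0 : ∀ t, f t ≠ 0) {s : ℝ} (hs : 0 < f s) (t : ℝ) : 0 < f t := by
  by_contra! ht
  obtain ⟨r, -, hr⟩ := intermediate_value_uIcc (a := s) (b := t) hf.continuousOn
    (mem_uIcc.mpr (Or.inr ⟨ht, hs.le⟩))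
  exact hf0 r hr

section Delaunay

variable {n k : ℤ} {ε : ℝ} {v : ℝ → ℝ}

theorem cast_sub_two_mul_pos (hnk : 2 * k < n) : (0 : ℝ) < n - 2 * k := by
  have : ((2 * k : ℤ) : ℝ) < n := by exact_mod_cast hnk
  push_cast at this
  linarith

theorem ham_zero_nonneg (hk : 0 ≤ k) (hnk : 2 * k < n) {x : ℝ} (hx0 : 0 ≤ x) (hx1 : x ≤ 1) :
    0 ≤ Ham n k x 0 := by
  have hK : ((2 * k.toNat : ℕ) : ℝ) = 2 * k := by
    rw [Nat.cast_mul, Nat.cast_ofNat, Int.cast_toNat_of_nonneg hk]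
  have hd := cast_sub_two_mul_pos hnk
  have hkR : (0 : ℝ) ≤ k := by exact_mod_cast hk
  have hexp : (2 * k : ℝ) ≤ 2 * k * n / (n - 2 * k) := by
    rw [le_div_iff₀ hd]; nlinarith
  unfold Ham
  rw [sub_nonneg, zero_pow two_ne_zero, mul_zero, sub_zero, ← pow_mul, ← rpow_natCast, hK]
  exact rpow_le_rpow_of_exponent_ge' hx0 hx1 (by positivity) hexp

theorem DelaunayODE.ham_eq (hode : DelaunayODE n k v) (hk : 0 ≤ k) (hv : ContDiff ℝ 2 v)
    (hv0 : ∀ t, v t ≠ 0) (s t : ℝ) :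
    Ham n k (v s) (deriv v s) = Ham n k (v t) (deriv v t) := by
  have hd : ∀ t, HasDerivAt (fun t => Ham n k (v t) (deriv v t)) 0 t := by
    intro t
    have hv' := (hv.differentiable (by norm_num) t).hasDerivAt
    have hv'' := (hv.differentiable_deriv_two t).hasDerivAt
    refine ((((hv'.pow 2).sub ((hv''.pow 2).const_mul _)).pow k.toNat).sub
      (hv'.rpow_const (Or.inl (hv0 t)))).congr_deriv ?_
    simp only [Pi.sub_apply, Pi.pow_apply]
    linear_combination (2 * (k.toNat : ℝ) * deriv v t) * hode t
      + (2 * deriv v t * (n / (n - 2 * k)) * v t ^ (2 * (k : ℝ) * n / (n - 2 * k) - 1)) *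
        Int.cast_toNat_of_nonneg (R := ℝ) hk
  exact is_const_of_deriv_eq_zero (fun t => (hd t).differentiableAt) (fun t => (hd t).deriv) s t

local notation "α" => ((n : ℝ) - 2 * k) / (2 * k)
local notation "β" => 2 * (k : ℝ) / ((n : ℝ) - 2 * k)
local notation "γ" => ((n : ℝ) + 2 * k) / (2 * k)

namespace IsDelaunay

theorem pos (hv : IsDelaunay n k ε v) (hε : 0 < ε) (t : ℝ) : 0 < v t :=
  (rpow_pos_of_pos hε _).trans_le (hv.2.2.2.2 t).1

theorem rpow_le_pow_sq_sub (hv : IsDelaunay n k ε v) (hε : 0 < ε) (hk : 0 ≤ k)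
    (hnk : 2 * k < n) (t : ℝ) :
    v t ^ (2 * (k : ℝ) * n / ((n : ℝ) - 2 * k)) ≤
      (v t ^ 2 - β ^ 2 * deriv v t ^ 2) ^ k.toNat := by
  have hcons := hv.2.1.ham_eq hk hv.1 (fun s => (hv.pos hε s).ne') t 0
  have h0 := ham_zero_nonneg hk hnk (hv.pos hε 0).le (hv.2.2.2.2 0).2
  rw [hv.2.2.1] at hcons
  rw [← hcons] at h0
  unfold Ham at h0
  linarith

theorem sq_sub_pos (hv : IsDelaunay n k ε v) (hε : 0 < ε) (hk : 0 < k) (hnk : 2 * k < n)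
    (t : ℝ) : 0 < v t ^ 2 - β ^ 2 * deriv v t ^ 2 := by
  refine Continuous.pos_of_forall_ne_zero (f := fun t => v t ^ 2 - β ^ 2 * deriv v t ^ 2)
    (s := 0) ?_ (fun s hs => ?_) ?_ t
  · exact (hv.1.continuous.pow 2).sub
      (continuous_const.mul ((hv.1.continuous_deriv (by norm_num)).pow 2))
  · have hpos := (rpow_pos_of_pos (hv.pos hε s) _).trans_le
      (hv.rpow_le_pow_sq_sub hε hk.le hnk s)
    rw [hs, zero_pow (by omega)] at hpos
    exact hpos.false
  · simp [hv.2.2.1, hv.pos hε 0]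

theorem rpow_le_sq_sub (hv : IsDelaunay n k ε v) (hε : 0 < ε) (hk : 0 < k) (hnk : 2 * k < n)
    (t : ℝ) :
    v t ^ (2 * (n : ℝ) / ((n : ℝ) - 2 * k)) ≤ v t ^ 2 - β ^ 2 * deriv v t ^ 2 := by
  refine le_of_pow_le_pow_left₀ (n := k.toNat) (by omega) (hv.sq_sub_pos hε hk hnk t).le ?_
  rw [← rpow_natCast, ← rpow_mul (hv.pos hε t).le, Int.cast_toNat_of_nonneg hk.le,
    div_mul_eq_mul_div, mul_right_comm]
  exact hv.rpow_le_pow_sq_sub hε hk.le hnk t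

theorem sub_deriv_deriv_pos (hv : IsDelaunay n k ε v) (hε : 0 < ε) (hk : 0 < k)
    (hnk : 2 * k < n) (t : ℝ) : 0 < v t - β ^ 2 * deriv (deriv v) t := by
  have hd := cast_sub_two_mul_pos hnk
  have hkR : (0 : ℝ) < k := by exact_mod_cast hk
  have hrhs : 0 < (n : ℝ) / (n - 2 * k) * v t ^ (2 * (k : ℝ) * n / (n - 2 * k) - 1) :=
    mul_pos (div_pos (by linarith) hd) (rpow_pos_of_pos (hv.pos hε t) _)
  rw [← hv.2.1 t] at hrhs
  exact pos_of_mul_pos_right hrhs (pow_pos (hv.sq_sub_pos hε hk hnk t) _).le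

theorem sub_deriv_deriv_le (hv : IsDelaunay n k ε v) (hε : 0 < ε) (hk : 0 < k)
    (hnk : 2 * k < n) (t : ℝ) :
    v t - β ^ 2 * deriv (deriv v) t ≤
      n / (n - 2 * k) * v t ^ (((n : ℝ) + 2 * k) / (n - 2 * k)) := by
  have hvt := hv.pos hε t
  set a : ℝ := 2 * (n : ℝ) / (n - 2 * k) * ((k.toNat - 1 : ℕ) : ℝ)
  have hPa : v t ^ a ≤ (v t ^ 2 - β ^ 2 * deriv v t ^ 2) ^ (k.toNat - 1) := by
    rw [rpow_mul hvt.le, rpow_natCast]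
    exact pow_le_pow_left₀ (rpow_nonneg hvt.le _) (hv.rpow_le_sq_sub hε hk hnk t) _
  have hsplit : v t ^ (2 * (k : ℝ) * n / (n - 2 * k) - 1) =
      v t ^ a * v t ^ (((n : ℝ) + 2 * k) / (n - 2 * k)) := by
    rw [← rpow_add hvt]
    congr 1
    simp only [a]
    rw [Nat.cast_sub (by omega), Int.cast_toNat_of_nonneg hk.le]
    field_simp [(cast_sub_two_mul_pos hnk).ne']
    ring
  refine le_of_mul_le_mul_left ?_ (rpow_pos_of_pos hvt a)
  calc v t ^ a * (v t - β ^ 2 * deriv (deriv v) t)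
      ≤ (v t ^ 2 - β ^ 2 * deriv v t ^ 2) ^ (k.toNat - 1) * (v t - β ^ 2 * deriv (deriv v) t) :=
        mul_le_mul_of_nonneg_right hPa (hv.sub_deriv_deriv_pos hε hk hnk t).le
    _ = _ := by rw [hv.2.1 t, hsplit]; ring

theorem hasDerivAt_cosh_sub (hv : IsDelaunay n k ε v) (t : ℝ) :
    HasDerivAt (fun t => ε ^ α * cosh (α * t) - v t)
      (ε ^ α * (α * sinh (α * t)) - deriv v t) t :=
  ((((hasDerivAt_id' t).const_mul α).cosh.const_mul _).sub
    (hv.1.differentiable (by norm_num) t).hasDerivAt).congr_deriv (by ring)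

theorem hasDerivAt_sinh_sub (hv : IsDelaunay n k ε v) (hk : 0 < k) (hnk : 2 * k < n) (t : ℝ) :
    HasDerivAt (fun t => ε ^ α * (α * sinh (α * t)) - deriv v t)
      (α ^ 2 * (ε ^ α * cosh (α * t) - v t) +
        α ^ 2 * (v t - β ^ 2 * deriv (deriv v) t)) t := by
  have hαβ : α * β = 1 := by
    have hkR : (k : ℝ) ≠ 0 := by exact_mod_cast hk.ne'
    field_simp [(cast_sub_two_mul_pos hnk).ne']
  refine ((((hasDerivAt_id' t).const_mul α).sinh.const_mul α |>.const_mul _).sub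
    (hv.1.differentiable_deriv_two t).hasDerivAt).congr_deriv ?_
  linear_combination (deriv (deriv v) t * (α * β + 1)) * hαβ

theorem cosh_sub_nonneg (hv : IsDelaunay n k ε v) (hε : 0 < ε) (hk : 0 < k) (hnk : 2 * k < n)
    {t : ℝ} (ht : 0 ≤ t) : 0 ≤ ε ^ α * cosh (α * t) - v t :=
  nonneg_of_hasDerivAt_eq_sq_mul_add hv.hasDerivAt_cosh_sub (hv.hasDerivAt_sinh_sub hk hnk)
    (by simp [hv.2.2.2.1]) (by simp [hv.2.2.1])
    (fun s _ => mul_nonneg (sq_nonneg _) (hv.sub_deriv_deriv_pos hε hk hnk s).le) ht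

theorem le_mul_exp (hv : IsDelaunay n k ε v) (hε : 0 < ε) (hk : 0 < k) (hnk : 2 * k < n)
    {t : ℝ} (ht : 0 ≤ t) : v t ≤ ε ^ α * exp (α * t) := by
  have hkR : (0 : ℝ) < k := by exact_mod_cast hk
  have hα : 0 < α := div_pos (cast_sub_two_mul_pos hnk) (by positivity)
  have hcosh : cosh (α * t) ≤ exp (α * t) := by
    rw [cosh_eq]
    linarith [exp_le_exp.mpr (neg_le_self (mul_nonneg hα.le ht))]
  nlinarith [hv.cosh_sub_nonneg hε hk hnk ht, rpow_pos_of_pos hε α]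

theorem sub_deriv_deriv_le_mul_exp (hv : IsDelaunay n k ε v) (hε : 0 < ε) (hk : 0 < k)
    (hnk : 2 * k < n) {t : ℝ} (ht : 0 ≤ t) :
    v t - β ^ 2 * deriv (deriv v) t ≤ n / (n - 2 * k) * ε ^ γ * exp (γ * t) := by
  have hd := cast_sub_two_mul_pos hnk
  have hkR : (0 : ℝ) < k := by exact_mod_cast hk
  have hn : (0 : ℝ) ≤ n / (n - 2 * k) := div_nonneg (by linarith) hd.le
  have he : (0 : ℝ) ≤ ((n : ℝ) + 2 * k) / (n - 2 * k) := div_nonneg (by linarith) hd.le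
  have hexp : α * (((n : ℝ) + 2 * k) / (n - 2 * k)) = γ := by field_simp
  calc v t - β ^ 2 * deriv (deriv v) t
      ≤ n / (n - 2 * k) * v t ^ (((n : ℝ) + 2 * k) / (n - 2 * k)) :=
        hv.sub_deriv_deriv_le hε hk hnk t
    _ ≤ n / (n - 2 * k) * (ε ^ α * exp (α * t)) ^ (((n : ℝ) + 2 * k) / (n - 2 * k)) := by
        gcongr
        · exact (hv.pos hε t).le
        · exact hv.le_mul_exp hε hk hnk ht
    _ = n / (n - 2 * k) * ε ^ γ * exp (γ * t) := by
        rw [mul_rpow (rpow_nonneg hε.le _) (exp_pos _).le, ← rpow_mul hε.le, ← exp_mul,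
          hexp, mul_right_comm, hexp, mul_assoc]

theorem cosh_sub_le (hv : IsDelaunay n k ε v) (hε : 0 < ε) (hk : 0 < k) (hnk : 2 * k < n)
    {t : ℝ} (ht : 0 ≤ t) :
    ε ^ α * cosh (α * t) - v t ≤ α / 4 * ε ^ γ * exp (γ * t) := by
  have hd := cast_sub_two_mul_pos hnk
  have hkR : (0 : ℝ) < k := by exact_mod_cast hk
  have hα : 0 < α := by positivity
  have hn : (0 : ℝ) ≤ n / (n - 2 * k) := div_nonneg (by linarith) hd.le
  have hαγ : γ = α + 2 := by field_simp; ring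
  have hh : ∀ s, 0 ≤ s → α ^ 2 * (v s - β ^ 2 * deriv (deriv v) s) ≤
      α ^ 2 * (n / (n - 2 * k)) * ε ^ γ * exp (γ * s) := fun s hs => by
    rw [mul_assoc, mul_assoc, ← mul_assoc (_ / _)]
    exact mul_le_mul_of_nonneg_left (hv.sub_deriv_deriv_le_mul_exp hε hk hnk hs) (sq_nonneg _)
  refine (le_mul_exp_of_hasDerivAt_eq_sq_mul_add hv.hasDerivAt_cosh_sub
    (hv.hasDerivAt_sinh_sub hk hnk) (by simp [hv.2.2.2.1]) (by simp [hv.2.2.1])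
    (by positivity) (by rw [abs_of_pos hα, hαγ]; linarith) hh ht).trans_eq ?_
  rw [hαγ]
  field_simp
  ring

end IsDelaunay

end Delaunay

theorem delaunay_cosh_comparison
    (n k : ℤ) (hk : 0 < k) (hnk : 2 * k < n) :
    ∃ c : ℝ, 0 < c ∧
      ∀ ε : ℝ, 0 < ε → ε < (((n : ℝ) - 2 * k) / n) ^ (1 / (2 * (k : ℝ))) →
        ∀ v : ℝ → ℝ, IsDelaunay n k ε v →
          ∀ t : ℝ, 0 ≤ t →
            0 ≤ ε ^ (((n : ℝ) - 2 * k) / (2 * k)) *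
                Real.cosh (((n : ℝ) - 2 * k) / (2 * k) * t) - v t ∧
              ε ^ (((n : ℝ) - 2 * k) / (2 * k)) *
                  Real.cosh (((n : ℝ) - 2 * k) / (2 * k) * t) - v t ≤
                c * ε ^ (((n : ℝ) + 2 * k) / (2 * k)) *
                  Real.exp (((n : ℝ) + 2 * k) / (2 * k) * t) := by
  have hd := cast_sub_two_mul_pos hnk
  have hkR : (0 : ℝ) < k := by exact_mod_cast hk
  exact ⟨((n : ℝ) - 2 * k) / (2 * k) / 4, by positivity, fun ε hε _ v hv t ht =>
    ⟨hv.cosh_sub_nonneg hε hk hnk ht, hv.cosh_sub_le hε hk hnk ht⟩⟩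
end

section
/- Let n and k be integers with 0 < k and 2k < n, and work in the n-dimensional Euclidean space E = EuclideanSpace ℝ (Fin n). There exist r₀ ∈ (0,1) and C > 0, depending only on n and k, with the following property. Let ε ∈ (0, ((n−2k)/n)^(1/(2k))), let v be a Delaunay solution with necksize ε, let R > 0, and for a ∈ E and x ∈ E with x ≠ 0 and ‖x − ‖x‖²·a‖ ≠ 0 define u_{ε,R,a}(x) = ‖x − ‖x‖²·a‖^((2k−n)/(2k)) · v(−2 log‖x‖ + log‖x − ‖x‖²·a‖ + log R), u_{ε,R}(x) = ‖x‖^((2k−n)/(2k)) · v(−log‖x‖ + log R), and D(x) = ((2k−n)/(2k)) · u_{ε,R}(x) − ‖x‖^((2k−n)/(2k)) · v'(−log‖x‖ + log R). Then for all a ∈ E and x ∈ E with 0 < ‖x‖ ≤ 1 and ‖a‖·‖x‖ < r₀: |u_{ε,R,a}(x) − u_{ε,R}(x) − ((n−2k)/k · u_{ε,R}(x) + D(x)) · ⟨a, x⟩| ≤ C · ‖a‖² · ‖x‖^((6k−n)/(2k)); and if moreover R ≤ ‖x‖, then |u_{ε,R,a}(x) − u_{ε,R}(x) − ((n−2k)/k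 · u_{ε,R}(x) + D(x)) · ⟨a, x⟩| ≤ C · ‖a‖² · ε^((n−2k)/(2k)) · R^((2k−n)/(2k)) · ‖x‖². -/
open Real

open scoped RealInnerProductSpace

/-- The translated Delaunay-type solution
`u_{ε,R,a}(x) = ‖x − ‖x‖²a‖^((2k−n)/(2k)) · v(−2 log‖x‖ + log‖x − ‖x‖²a‖ + log R)`. -/
noncomputable def uRa (n k : ℤ) (v : ℝ → ℝ) (R : ℝ)
    (a x : EuclideanSpace ℝ (Fin n.toNat)) : ℝ :=
  ‖x - ‖x‖ ^ 2 • a‖ ^ ((2 * (k : ℝ) - n) / (2 * k)) *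
    v (-2 * Real.log ‖x‖ + Real.log ‖x - ‖x‖ ^ 2 • a‖ + Real.log R)

/-- `u_{ε,R}(x) = ‖x‖^((2k−n)/(2k)) · v(−log‖x‖ + log R)`. -/
noncomputable def uR (n k : ℤ) (v : ℝ → ℝ) (R : ℝ)
    (x : EuclideanSpace ℝ (Fin n.toNat)) : ℝ :=
  ‖x‖ ^ ((2 * (k : ℝ) - n) / (2 * k)) * v (-Real.log ‖x‖ + Real.log R)

/-- `D(x) = ((2k−n)/(2k)) u_{ε,R}(x) − ‖x‖^((2k−n)/(2k)) v'(−log‖x‖ + log R)`,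
which equals the radial derivative term `|x| ∂_r u_{ε,R}(x)`. -/
noncomputable def Dterm (n k : ℤ) (v : ℝ → ℝ) (R : ℝ)
    (x : EuclideanSpace ℝ (Fin n.toNat)) : ℝ :=
  (2 * (k : ℝ) - n) / (2 * k) * uR n k v R x -
    ‖x‖ ^ ((2 * (k : ℝ) - n) / (2 * k)) * deriv v (-Real.log ‖x‖ + Real.log R)

/-!
With `q = 1 - 2⟪a, x⟫ + ‖a‖²‖x‖²` one has `‖x - ‖x‖²a‖ = ‖x‖ √q`, so for `A = (n-2k)/(2k)` and
`t₀ = log R - log ‖x‖` the translated solution is `‖x‖^(-A) φ(q)` with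
`φ(r) = r^(-A/2) v(t₀ + (log r)/2)`, while `u_{ε,R}(x) = ‖x‖^(-A) φ(1)` and the linear term of the
expansion is `‖x‖^(-A) φ'(1) (q - 1 - ‖a‖²‖x‖²)`. The error is thus a second-order Taylor remainder
of `φ` at `1` plus `‖x‖^(-A) φ'(1) ‖a‖²‖x‖²`, both `O(‖a‖²‖x‖^(2-A) v(t₀))` once `|v'| ≤ A v` and
`|v''| ≤ n/(n-2k) A² v`. These bounds follow from conservation of the Hamiltonian, which is
nonnegative because `v ≤ 1`. For `‖x‖ ≥ R`, `|v'| ≤ A v` also gives `v(t₀) ≤ v(0) (‖x‖/R)^A`.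
-/

open Set

theorem Convex.abs_sub_sub_mul_le_of_abs_deriv_le {f f' f'' : ℝ → ℝ} {s : Set ℝ} {C x y : ℝ}
    (hs : Convex ℝ s) (hf : ∀ z ∈ s, HasDerivAt f (f' z) z)
    (hf' : ∀ z ∈ s, HasDerivAt f' (f'' z) z) (hC : ∀ z ∈ s, |f'' z| ≤ C)
    (hx : x ∈ s) (hy : y ∈ s) :
    |f y - f x - f' x * (y - x)| ≤ C * (y - x) ^ 2 := by
  have hxy : uIcc x y ⊆ s := hs.ordConnected.uIcc_subset hx hy
  have hlip : ∀ z ∈ uIcc x y, |f' z - f' x| ≤ C * |y - x| := fun z hz =>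
    (hs.norm_image_sub_le_of_norm_hasDerivWithin_le (fun w hw => (hf' w hw).hasDerivWithinAt)
      hC hx (hxy hz)).trans (by gcongr; exacts [(abs_nonneg _).trans (hC x hx),
        abs_sub_left_of_mem_uIcc hz])
  have := (convex_uIcc x y).norm_image_sub_le_of_norm_hasDerivWithin_le
    (f := fun z => f z - f' x * z) (fun z hz => (((hf z (hxy hz)).sub
      ((hasDerivAt_id z).const_mul (f' x))).congr_deriv (by simp)).hasDerivWithinAt)
    hlip left_mem_uIcc right_mem_uIcc
  simp only [Real.norm_eq_abs] at this
  calc |f y - f x - f' x * (y - x)| = |f y - f' x * y - (f x - f' x * x)| := by ring_nf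
    _ ≤ C * |y - x| * |y - x| := this
    _ = C * (y - x) ^ 2 := by rw [mul_assoc, ← abs_mul, ← sq, abs_sq]

theorem le_mul_exp_of_abs_deriv_le {v v' : ℝ → ℝ} {A : ℝ} (hv : ∀ t, HasDerivAt v (v' t) t)
    (hpos : ∀ t, 0 < v t) (hA : ∀ t, |v' t| ≤ A * v t) (s t : ℝ) :
    v t ≤ v s * exp (A * |t - s|) := by
  have hlog : |log (v t) - log (v s)| ≤ A * |t - s| := by
    refine convex_univ.norm_image_sub_le_of_norm_hasDerivWithin_le
      (fun u _ => ((hv u).log (hpos u).ne').hasDerivWithinAt) (fun u _ => ?_)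
      (mem_univ s) (mem_univ t)
    rw [Real.norm_eq_abs, abs_div, abs_of_pos (hpos u), div_le_iff₀ (hpos u)]
    exact hA u
  calc v t = exp (log (v t)) := (exp_log (hpos t)).symm
    _ ≤ exp (log (v s) + A * |t - s|) :=
        exp_le_exp.mpr (by linarith [le_abs_self (log (v t) - log (v s))])
    _ = v s * exp (A * |t - s|) := by rw [exp_add, exp_log (hpos s)]

theorem hasDerivAt_rpow_mul_comp_log {w w' : ℝ → ℝ} (hw : ∀ t, HasDerivAt w (w' t) t)
    (e t₀ : ℝ) {r : ℝ} (hr : 0 < r) :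
    HasDerivAt (fun r => r ^ e * w (t₀ + log r / 2))
      (r ^ (e - 1) * (e * w (t₀ + log r / 2) + w' (t₀ + log r / 2) / 2)) r := by
  refine ((hasDerivAt_rpow_const (p := e) (Or.inl hr.ne')).mul ((hw _).comp r
    (((hasDerivAt_log hr.ne').div_const 2).const_add t₀))).congr_deriv ?_
  rw [rpow_sub_one hr.ne', Function.comp_apply]
  field_simp

theorem abs_log_le_of_mem_Icc {r : ℝ} (hr : r ∈ Icc (1 / 4 : ℝ) (9 / 4)) : |log r| ≤ 4 := by
  have hr0 : 0 < r := by linarith [hr.1]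
  have h1 := one_sub_inv_le_log_of_pos hr0
  have h2 : r⁻¹ ≤ 4 := by rw [inv_le_comm₀ hr0 (by norm_num)]; linarith [hr.1]
  rw [abs_le]
  constructor <;> linarith [log_le_sub_one_of_pos hr0, hr.2]

theorem abs_second_deriv_factor_le {A B v v' v'' : ℝ} (hA : 0 ≤ A) (hv : 0 ≤ v)
    (h1 : |v'| ≤ A * v) (h2 : |v''| ≤ B * v) :
    |(-A / 2 - 1) * (-A / 2 * v + v' / 2) + (-A / 2 * v' + v'' / 2) / 2| ≤
      (3 * A ^ 2 / 4 + A + B / 4) * v := by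
  obtain ⟨h1l, h1r⟩ := abs_le.mp h1
  obtain ⟨h2l, h2r⟩ := abs_le.mp h2
  have hAl := mul_le_mul_of_nonneg_left h1l hA
  have hAr := mul_le_mul_of_nonneg_left h1r hA
  have hAv := mul_nonneg hA hv
  rw [abs_le]; constructor <;> nlinarith

theorem exists_abs_rpow_mul_comp_log_sub_le {A B : ℝ} (hA : 0 ≤ A) (hB : 0 ≤ B) :
    ∃ M, 0 ≤ M ∧ ∀ v v' v'' : ℝ → ℝ, (∀ t, HasDerivAt v (v' t) t) →
      (∀ t, HasDerivAt v' (v'' t) t) → (∀ t, 0 < v t) → (∀ t, |v' t| ≤ A * v t) →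
      (∀ t, |v'' t| ≤ B * v t) → ∀ t₀ q, q ∈ Icc (1 / 4 : ℝ) (9 / 4) →
      |q ^ (-A / 2) * v (t₀ + log q / 2) - v t₀ - (v' t₀ - A * v t₀) / 2 * (q - 1)| ≤
        M * v t₀ * (q - 1) ^ 2 := by
  refine ⟨4 ^ (A / 2 + 2) * exp (2 * A) * (3 * A ^ 2 / 4 + A + B / 4), by positivity, ?_⟩
  intro v v' v'' hv hv' hpos h1 h2 t₀ q hq
  have hr0 : ∀ r ∈ Icc (1 / 4 : ℝ) (9 / 4), 0 < r := fun r hr => by linarith [hr.1]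
  have hw : ∀ t, HasDerivAt (fun t => -A / 2 * v t + v' t / 2) (-A / 2 * v' t + v'' t / 2) t :=
    fun t => ((hv t).const_mul _).add ((hv' t).div_const 2)
  have hbd : ∀ r ∈ Icc (1 / 4 : ℝ) (9 / 4), |r ^ (-A / 2 - 1 - 1) *
      ((-A / 2 - 1) * (-A / 2 * v (t₀ + log r / 2) + v' (t₀ + log r / 2) / 2) +
        (-A / 2 * v' (t₀ + log r / 2) + v'' (t₀ + log r / 2) / 2) / 2)| ≤
      4 ^ (A / 2 + 2) * exp (2 * A) * (3 * A ^ 2 / 4 + A + B / 4) * v t₀ := by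
    intro r hr
    set τ := t₀ + log r / 2
    have hpow : r ^ (-A / 2 - 1 - 1) ≤ 4 ^ (A / 2 + 2) := by
      calc r ^ (-A / 2 - 1 - 1) ≤ (1 / 4) ^ (-A / 2 - 1 - 1) :=
            rpow_le_rpow_of_nonpos (by norm_num) hr.1 (by linarith)
        _ = 4 ^ (A / 2 + 2) := by
            rw [one_div, inv_rpow (by norm_num), ← rpow_neg (by norm_num)]; ring_nf
    have hvτ : v τ ≤ v t₀ * exp (2 * A) := by
      refine (le_mul_exp_of_abs_deriv_le hv hpos h1 t₀ τ).trans ?_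
      have hτ : |τ - t₀| ≤ 2 := by
        rw [show τ - t₀ = log r / 2 by ring, abs_div, abs_two]
        linarith [abs_log_le_of_mem_Icc hr]
      rw [mul_comm 2 A]
      have := (hpos t₀).le
      gcongr
    rw [abs_mul, abs_of_pos (rpow_pos_of_pos (hr0 r hr) _)]
    calc _ ≤ 4 ^ (A / 2 + 2) * ((3 * A ^ 2 / 4 + A + B / 4) * v τ) :=
          mul_le_mul hpow (abs_second_deriv_factor_le hA (hpos τ).le (h1 τ) (h2 τ))
            (abs_nonneg _) (by positivity)
      _ ≤ 4 ^ (A / 2 + 2) * ((3 * A ^ 2 / 4 + A + B / 4) * (v t₀ * exp (2 * A))) := by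
          gcongr
      _ = _ := by ring
  have := Convex.abs_sub_sub_mul_le_of_abs_deriv_le (convex_Icc _ _)
    (fun r hr => hasDerivAt_rpow_mul_comp_log hv (-A / 2) t₀ (hr0 r hr))
    (fun r hr => hasDerivAt_rpow_mul_comp_log hw (-A / 2 - 1) t₀ (hr0 r hr)) hbd
    (by norm_num : (1 : ℝ) ∈ Icc (1 / 4 : ℝ) (9 / 4)) hq
  simp only [log_one, zero_div, add_zero, one_rpow, one_mul] at this
  convert this using 4
  ring

/-- `DelaunayODE n k` with the constants `2k/(n-2k)`, `n/(n-2k)`, `k` abstracted to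
`c`, `κ`, `K`. -/
structure IsDelaunayProfile (c κ : ℝ) (K : ℕ) (v : ℝ → ℝ) : Prop where
  contDiff : ContDiff ℝ 2 v
  ode : ∀ t, (v t ^ 2 - c ^ 2 * deriv v t ^ 2) ^ (K - 1) * (v t - c ^ 2 * deriv (deriv v) t) =
    κ * v t ^ (2 * κ * K - 1)
  pos : ∀ t, 0 < v t
  le_one : ∀ t, v t ≤ 1
  deriv_zero : deriv v 0 = 0

namespace IsDelaunayProfile

variable {c κ : ℝ} {K : ℕ} {v : ℝ → ℝ}

theorem hasDerivAt (hv : IsDelaunayProfile c κ K v) (t : ℝ) : HasDerivAt v (deriv v t) t :=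
  (hv.contDiff.differentiable (by norm_num) t).hasDerivAt

theorem contDiff_deriv (hv : IsDelaunayProfile c κ K v) : ContDiff ℝ 1 (deriv v) :=
  ((contDiff_succ_iff_deriv (n := 1)).mp hv.contDiff).2.2

theorem hasDerivAt_deriv (hv : IsDelaunayProfile c κ K v) (t : ℝ) :
    HasDerivAt (deriv v) (deriv (deriv v) t) t :=
  (hv.contDiff_deriv.differentiable one_ne_zero t).hasDerivAt

theorem rpow_mul_natCast (hv : IsDelaunayProfile c κ K v) (t : ℝ) :
    v t ^ (2 * κ * K) = (v t ^ (2 * κ)) ^ K := by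
  rw [rpow_mul (hv.pos t).le, rpow_natCast]

theorem hamiltonian_eq (hv : IsDelaunayProfile c κ K v) (t : ℝ) :
    (v t ^ 2 - c ^ 2 * deriv v t ^ 2) ^ K - v t ^ (2 * κ * K) =
      (v 0 ^ 2 - c ^ 2 * deriv v 0 ^ 2) ^ K - v 0 ^ (2 * κ * K) := by
  have hE : ∀ t, HasDerivAt
      (fun t => (v t ^ 2 - c ^ 2 * deriv v t ^ 2) ^ K - v t ^ (2 * κ * K)) 0 t := by
    intro t
    have h := ((((hv.hasDerivAt t).fun_pow 2).sub (((hv.hasDerivAt_deriv t).fun_pow 2).const_mul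
      (c ^ 2))).fun_pow K).sub ((hasDerivAt_rpow_const (p := 2 * κ * K)
        (Or.inl (hv.pos t).ne')).comp t (hv.hasDerivAt t))
    refine h.congr_deriv ?_
    calc _ = 2 * K * deriv v t * ((v t ^ 2 - c ^ 2 * deriv v t ^ 2) ^ (K - 1) *
          (v t - c ^ 2 * deriv (deriv v) t) - κ * v t ^ (2 * κ * K - 1)) := by
          simp only [Pi.sub_apply]; push_cast; ring
      _ = 0 := by rw [hv.ode t, sub_self, mul_zero]
  exact is_const_of_deriv_eq_zero (fun t => (hE t).differentiableAt) (fun t => (hE t).deriv) t 0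

theorem rpow_le_sq (hv : IsDelaunayProfile c κ K v) (hκ : 1 ≤ κ) (t : ℝ) :
    v t ^ (2 * κ) ≤ v t ^ 2 := by
  rw [← rpow_two]
  exact rpow_le_rpow_of_exponent_ge (hv.pos t) (hv.le_one t) (by linarith)

theorem rpow_pow_le_sq_sub_pow (hv : IsDelaunayProfile c κ K v) (hκ : 1 ≤ κ) (t : ℝ) :
    (v t ^ (2 * κ)) ^ K ≤ (v t ^ 2 - c ^ 2 * deriv v t ^ 2) ^ K := by
  have h0 : (v 0 ^ (2 * κ)) ^ K ≤ (v 0 ^ 2) ^ K :=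
    pow_le_pow_left₀ (rpow_nonneg (hv.pos 0).le _) (hv.rpow_le_sq hκ 0) K
  have := hv.hamiltonian_eq t
  rw [hv.deriv_zero, zero_pow two_ne_zero, mul_zero, sub_zero, hv.rpow_mul_natCast,
    hv.rpow_mul_natCast] at this
  linarith

theorem sq_sub_pos (hv : IsDelaunayProfile c κ K v) (hκ : 1 ≤ κ) (hK : K ≠ 0) (t : ℝ) :
    0 < v t ^ 2 - c ^ 2 * deriv v t ^ 2 := by
  by_contra! ht
  have hg : Continuous fun t => v t ^ 2 - c ^ 2 * deriv v t ^ 2 :=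
    hv.contDiff.continuous.pow 2 |>.sub <| continuous_const.mul <|
      hv.contDiff_deriv.continuous.pow 2
  have h0 : 0 < v 0 ^ 2 - c ^ 2 * deriv v 0 ^ 2 := by
    rw [hv.deriv_zero]; simpa using pow_pos (hv.pos 0) 2
  obtain ⟨s, hs : v s ^ 2 - c ^ 2 * deriv v s ^ 2 = 0⟩ :=
    intermediate_value_univ t 0 hg ⟨ht, h0.le⟩
  have := hv.rpow_pow_le_sq_sub_pow hκ s
  rw [hs, zero_pow hK] at this
  exact this.not_gt (pow_pos (rpow_pos_of_pos (hv.pos s) _) K)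

theorem rpow_le_sq_sub (hv : IsDelaunayProfile c κ K v) (hκ : 1 ≤ κ) (hK : K ≠ 0) (t : ℝ) :
    v t ^ (2 * κ) ≤ v t ^ 2 - c ^ 2 * deriv v t ^ 2 :=
  le_of_pow_le_pow_left₀ hK (hv.sq_sub_pos hκ hK t).le (hv.rpow_pow_le_sq_sub_pow hκ t)

theorem abs_deriv_le (hv : IsDelaunayProfile c κ K v) (hc : 0 < c) (hκ : 1 ≤ κ) (hK : K ≠ 0)
    (t : ℝ) : |deriv v t| ≤ c⁻¹ * v t := by
  rw [le_inv_mul_iff₀ hc, ← abs_of_pos hc, ← abs_mul]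
  refine abs_le_of_sq_le_sq ?_ (hv.pos t).le
  linarith [hv.sq_sub_pos hκ hK t]

theorem abs_deriv_deriv_le (hv : IsDelaunayProfile c κ K v) (hc : 0 < c) (hκ : 1 ≤ κ)
    (hK : K ≠ 0) (t : ℝ) : |deriv (deriv v) t| ≤ κ * c⁻¹ ^ 2 * v t := by
  set w := v t ^ (2 * κ)
  set X := v t - c ^ 2 * deriv (deriv v) t
  have hv0 := hv.pos t
  have hw : 0 < w := rpow_pos_of_pos hv0 _
  have hode : (v t ^ 2 - c ^ 2 * deriv v t ^ 2) ^ (K - 1) * X = κ * w ^ K / v t := by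
    rw [hv.ode t, rpow_sub_one hv0.ne', hv.rpow_mul_natCast, mul_div_assoc]
  have hg : w ^ (K - 1) ≤ (v t ^ 2 - c ^ 2 * deriv v t ^ 2) ^ (K - 1) :=
    pow_le_pow_left₀ hw.le (hv.rpow_le_sq_sub hκ hK t) _
  have hX : 0 < X := by
    refine pos_of_mul_pos_right ?_ ((pow_nonneg hw.le _).trans hg)
    rw [hode]; positivity
  have hXle : X ≤ κ * v t := by
    have hwv : w / v t ≤ v t := by
      rw [div_le_iff₀ hv0, ← sq]; exact hv.rpow_le_sq hκ t
    refine le_of_mul_le_mul_right ?_ (pow_pos hw (K - 1))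
    calc X * w ^ (K - 1) ≤ X * (v t ^ 2 - c ^ 2 * deriv v t ^ 2) ^ (K - 1) :=
          mul_le_mul_of_nonneg_left hg hX.le
      _ = κ * (w / v t) * w ^ (K - 1) := by
          rw [mul_comm, hode, mul_assoc, div_mul_eq_mul_div, ← pow_succ',
            Nat.sub_add_cancel (Nat.one_le_iff_ne_zero.mpr hK), mul_div_assoc]
      _ ≤ κ * v t * w ^ (K - 1) := by gcongr
  -- `0 < v - c²v'' ≤ κ v` and `1 ≤ κ` bound `c²v''` on both sides
  have hv'' : |c ^ 2 * deriv (deriv v) t| ≤ κ * v t := by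
    rw [abs_le]; constructor <;> nlinarith
  calc |deriv (deriv v) t| = c⁻¹ ^ 2 * |c ^ 2 * deriv (deriv v) t| := by
        rw [abs_mul, abs_of_pos (by positivity : 0 < c ^ 2), ← mul_assoc, ← mul_pow,
          inv_mul_cancel₀ hc.ne', one_pow, one_mul]
    _ ≤ c⁻¹ ^ 2 * (κ * v t) := by gcongr
    _ = κ * c⁻¹ ^ 2 * v t := by ring

end IsDelaunayProfile

theorem IsDelaunay.isDelaunayProfile {n k : ℤ} {ε : ℝ} {v : ℝ → ℝ} (hk : 0 < k) (hε : 0 < ε)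
    (hv : IsDelaunay n k ε v) :
    IsDelaunayProfile (2 * k / (n - 2 * k)) (n / (n - 2 * k)) k.toNat v := by
  obtain ⟨hcont, hode, hd0, -, hbd⟩ := hv
  have hK : ((k.toNat : ℕ) : ℝ) = k := by exact_mod_cast Int.toNat_of_nonneg hk.le
  refine ⟨hcont, fun t => ?_, fun t => (rpow_pos_of_pos hε _).trans_le (hbd t).1,
    fun t => (hbd t).2, hd0⟩
  rw [hode t, hK]
  ring_nf

namespace IsDelaunay

variable {n k : ℤ} {ε : ℝ} {v : ℝ → ℝ}

theorem abs_deriv_le (hk : 0 < k) (hnk : 2 * k < n) (hε : 0 < ε) (hv : IsDelaunay n k ε v)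
    (t : ℝ) : |deriv v t| ≤ ((n : ℝ) - 2 * k) / (2 * k) * v t := by
  have hnk' : (2 * k : ℝ) < n := by exact_mod_cast hnk
  have hk' : (0 : ℝ) < k := by exact_mod_cast hk
  simpa only [inv_div] using (hv.isDelaunayProfile hk hε).abs_deriv_le
    (div_pos (by positivity) (by linarith)) (by rw [le_div_iff₀ (by linarith)]; linarith)
    (by omega) t

theorem abs_deriv_deriv_le (hk : 0 < k) (hnk : 2 * k < n) (hε : 0 < ε) (hv : IsDelaunay n k ε v)
    (t : ℝ) : |deriv (deriv v) t| ≤ n / (n - 2 * k) * (((n : ℝ) - 2 * k) / (2 * k)) ^ 2 * v t := by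
  have hnk' : (2 * k : ℝ) < n := by exact_mod_cast hnk
  have hk' : (0 : ℝ) < k := by exact_mod_cast hk
  simpa only [inv_div] using (hv.isDelaunayProfile hk hε).abs_deriv_deriv_le
    (div_pos (by positivity) (by linarith)) (by rw [le_div_iff₀ (by linarith)]; linarith)
    (by omega) t

theorem rpow_mul_le (hk : 0 < k) (hnk : 2 * k < n) (hε : 0 < ε) (hv : IsDelaunay n k ε v)
    {R r : ℝ} (hR : 0 < R) (hRr : R ≤ r) :
    r ^ ((2 * (k : ℝ) - n) / (2 * k)) * v (-log r + log R) ≤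
      ε ^ (((n : ℝ) - 2 * k) / (2 * k)) * R ^ ((2 * (k : ℝ) - n) / (2 * k)) := by
  set A : ℝ := (n - 2 * k) / (2 * k)
  have hr : 0 < r := hR.trans_le hRr
  have hgrowth := le_mul_exp_of_abs_deriv_le (isDelaunayProfile hk hε hv).hasDerivAt
    (isDelaunayProfile hk hε hv).pos (hv.abs_deriv_le hk hnk hε) 0 (-log r + log R)
  rw [hv.2.2.2.1, sub_zero, abs_of_nonpos (by linarith [log_le_log hR hRr])] at hgrowth
  rw [show (2 * (k : ℝ) - n) / (2 * k) = -A by ring]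
  calc r ^ (-A) * v (-log r + log R) ≤ r ^ (-A) * (ε ^ A * exp (A * -(-log r + log R))) := by
        gcongr
    _ = ε ^ A * R ^ (-A) := by
        rw [rpow_def_of_pos hr, rpow_def_of_pos hR, mul_left_comm, ← exp_add]
        ring_nf

end IsDelaunay

section Geometry

variable {F : Type*} [NormedAddCommGroup F] [InnerProductSpace ℝ F]

theorem norm_sub_norm_sq_smul_sq (a x : F) :
    ‖x - ‖x‖ ^ 2 • a‖ ^ 2 = ‖x‖ ^ 2 * (1 - 2 * ⟪a, x⟫ + ‖a‖ ^ 2 * ‖x‖ ^ 2) := by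
  rw [norm_sub_sq_real, real_inner_smul_right, norm_smul, real_inner_comm, Real.norm_eq_abs,
    abs_of_nonneg (sq_nonneg _)]
  ring

theorem one_sub_two_inner_add_mem_Icc {a x : F} (h : ‖a‖ * ‖x‖ ≤ 1 / 2) :
    1 - 2 * ⟪a, x⟫ + ‖a‖ ^ 2 * ‖x‖ ^ 2 ∈ Icc (1 / 4 : ℝ) (9 / 4) := by
  obtain ⟨hl, hr⟩ := abs_le.mp (abs_real_inner_le_norm a x)
  have := mul_nonneg (norm_nonneg a) (norm_nonneg x)
  constructor <;> nlinarith

theorem sq_one_sub_two_inner_add_sub_one_le {a x : F} (h : ‖a‖ * ‖x‖ ≤ 1) :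
    (1 - 2 * ⟪a, x⟫ + ‖a‖ ^ 2 * ‖x‖ ^ 2 - 1) ^ 2 ≤ 9 * (‖a‖ ^ 2 * ‖x‖ ^ 2) := by
  obtain ⟨hl, hr⟩ := abs_le.mp (abs_real_inner_le_norm a x)
  have := mul_nonneg (norm_nonneg a) (norm_nonneg x)
  have h3 : 9 * (‖a‖ ^ 2 * ‖x‖ ^ 2) = (3 * (‖a‖ * ‖x‖)) ^ 2 := by ring
  rw [h3]
  apply sq_le_sq' <;> nlinarith

end Geometry

theorem uRa_eq {n k : ℤ} (v : ℝ → ℝ) (R : ℝ) {a x : EuclideanSpace ℝ (Fin n.toNat)}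
    (hx : 0 < ‖x‖) (hq : 0 < 1 - 2 * ⟪a, x⟫ + ‖a‖ ^ 2 * ‖x‖ ^ 2) :
    uRa n k v R a x = ‖x‖ ^ ((2 * (k : ℝ) - n) / (2 * k)) *
      ((1 - 2 * ⟪a, x⟫ + ‖a‖ ^ 2 * ‖x‖ ^ 2) ^ ((2 * (k : ℝ) - n) / (2 * k) / 2) *
        v (-log ‖x‖ + log R + log (1 - 2 * ⟪a, x⟫ + ‖a‖ ^ 2 * ‖x‖ ^ 2) / 2)) := by
  have hy : ‖x - ‖x‖ ^ 2 • a‖ = ‖x‖ * √(1 - 2 * ⟪a, x⟫ + ‖a‖ ^ 2 * ‖x‖ ^ 2) := by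
    rw [← sqrt_sq (norm_nonneg (x - _)), norm_sub_norm_sq_smul_sq, sqrt_mul (sq_nonneg _),
      sqrt_sq hx.le]
  rw [uRa, hy, mul_rpow hx.le (sqrt_nonneg _), sqrt_eq_rpow, ← rpow_mul hq.le,
    log_mul hx.ne' (rpow_pos_of_pos hq _).ne', log_rpow hq]
  ring_nf

theorem IsDelaunay.exists_abs_expansion_le {n k : ℤ} (hk : 0 < k) (hnk : 2 * k < n) :
    ∃ C : ℝ, 0 < C ∧ ∀ ε : ℝ, 0 < ε → ∀ v : ℝ → ℝ, IsDelaunay n k ε v →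
      ∀ (R : ℝ) (a x : EuclideanSpace ℝ (Fin n.toNat)), 0 < ‖x‖ → ‖a‖ * ‖x‖ ≤ 1 / 2 →
        |uRa n k v R a x - uR n k v R x -
            (((n : ℝ) - 2 * k) / k * uR n k v R x + Dterm n k v R x) * ⟪a, x⟫| ≤
          C * ‖a‖ ^ 2 * (‖x‖ ^ ((2 * (k : ℝ) - n) / (2 * k)) * v (-log ‖x‖ + log R)) *
            ‖x‖ ^ 2 := by
  have hk' : (0 : ℝ) < k := by exact_mod_cast hk
  have hnk' : (0 : ℝ) < n - 2 * k := by
    have : (2 * k : ℝ) < n := by exact_mod_cast hnk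
    linarith
  set A : ℝ := (n - 2 * k) / (2 * k) with hA_def
  have hA : 0 < A := by positivity
  have he : (2 * (k : ℝ) - n) / (2 * k) = -A := by ring
  have h2A : ((n : ℝ) - 2 * k) / k = 2 * A := by rw [hA_def]; field_simp
  obtain ⟨M, hM0, hM⟩ := exists_abs_rpow_mul_comp_log_sub_le (B := n / (n - 2 * k) * A ^ 2)
    hA.le (mul_nonneg (div_nonneg (by linarith) hnk'.le) (sq_nonneg A))
  refine ⟨9 * M + A, by positivity, fun ε hε v hv R a x hx hax => ?_⟩
  have hP := hv.isDelaunayProfile hk hε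
  have hq := one_sub_two_inner_add_mem_Icc hax
  rw [uRa_eq v R hx (by linarith [hq.1]), he]
  simp only [uR, Dterm, he, h2A]
  set q := 1 - 2 * ⟪a, x⟫ + ‖a‖ ^ 2 * ‖x‖ ^ 2
  set t₀ := -log ‖x‖ + log R
  have hT := hM v (deriv v) (deriv (deriv v)) hP.hasDerivAt hP.hasDerivAt_deriv hP.pos
    (hv.abs_deriv_le hk hnk hε) (hv.abs_deriv_deriv_le hk hnk hε) t₀ q hq
  have hlin : |(deriv v t₀ - A * v t₀) / 2| ≤ A * v t₀ := by
    have := hv.abs_deriv_le hk hnk hε t₀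
    rw [abs_le] at this ⊢
    constructor <;> nlinarith [hP.pos t₀]
  have hq1 := sq_one_sub_two_inner_add_sub_one_le (hax.trans (by norm_num))
  have hxA := rpow_pos_of_pos hx (-A)
  calc _ = ‖x‖ ^ (-A) * |(q ^ (-A / 2) * v (t₀ + log q / 2) - v t₀ -
          (deriv v t₀ - A * v t₀) / 2 * (q - 1)) +
          (deriv v t₀ - A * v t₀) / 2 * (‖a‖ ^ 2 * ‖x‖ ^ 2)| := by
        rw [← abs_of_pos hxA, ← abs_mul, abs_of_pos hxA]
        congr 1
        simp only [q]
        ring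
    _ ≤ ‖x‖ ^ (-A) * (M * v t₀ * (q - 1) ^ 2 + A * v t₀ * (‖a‖ ^ 2 * ‖x‖ ^ 2)) := by
        gcongr
        refine (abs_add_le _ _).trans (add_le_add hT ?_)
        rw [abs_mul, abs_of_nonneg (by positivity : 0 ≤ ‖a‖ ^ 2 * ‖x‖ ^ 2)]
        gcongr
    _ ≤ ‖x‖ ^ (-A) * (M * v t₀ * (9 * (‖a‖ ^ 2 * ‖x‖ ^ 2)) +
          A * v t₀ * (‖a‖ ^ 2 * ‖x‖ ^ 2)) := by
        have := hP.pos t₀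
        gcongr
    _ = _ := by ring

theorem translated_delaunay_expansion
    (n k : ℤ) (hk : 0 < k) (hnk : 2 * k < n) :
    ∃ r₀ : ℝ, r₀ ∈ Set.Ioo (0 : ℝ) 1 ∧
      ∃ C : ℝ, 0 < C ∧
        ∀ ε : ℝ, 0 < ε → ε < (((n : ℝ) - 2 * k) / n) ^ (1 / (2 * (k : ℝ))) →
          ∀ v : ℝ → ℝ, IsDelaunay n k ε v →
            ∀ R : ℝ, 0 < R →
              ∀ a x : EuclideanSpace ℝ (Fin n.toNat),
                0 < ‖x‖ → ‖x‖ ≤ 1 → ‖a‖ * ‖x‖ < r₀ →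
                  |uRa n k v R a x - uR n k v R x -
                      (((n : ℝ) - 2 * k) / k * uR n k v R x + Dterm n k v R x) *
                        ⟪a, x⟫| ≤
                    C * ‖a‖ ^ 2 * ‖x‖ ^ ((6 * (k : ℝ) - n) / (2 * k)) ∧
                  (R ≤ ‖x‖ →
                    |uRa n k v R a x - uR n k v R x -
                        (((n : ℝ) - 2 * k) / k * uR n k v R x + Dterm n k v R x) *
                          ⟪a, x⟫| ≤
                      C * ‖a‖ ^ 2 * ε ^ (((n : ℝ) - 2 * k) / (2 * k)) *
                        R ^ ((2 * (k : ℝ) - n) / (2 * k)) * ‖x‖ ^ 2) := by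
  obtain ⟨C, hC, hexp⟩ := IsDelaunay.exists_abs_expansion_le hk hnk
  refine ⟨1 / 2, ⟨by norm_num, by norm_num⟩, C, hC, fun ε hε _ v hv R hR a x hx _ hax => ?_⟩
  have key := hexp ε hε v hv R a x hx hax.le
  refine ⟨key.trans ?_, fun hRx => key.trans ?_⟩
  · have hx2 : ‖x‖ ^ ((2 * (k : ℝ) - n) / (2 * k)) * ‖x‖ ^ 2 =
        ‖x‖ ^ ((6 * (k : ℝ) - n) / (2 * k)) := by
      have hk' : (k : ℝ) ≠ 0 := by exact_mod_cast hk.ne'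
      rw [← rpow_natCast, ← rpow_add hx]
      congr 1
      field_simp
      ring
    calc _ ≤ C * ‖a‖ ^ 2 * (‖x‖ ^ ((2 * (k : ℝ) - n) / (2 * k)) * 1) * ‖x‖ ^ 2 := by
          gcongr
          exact (hv.isDelaunayProfile hk hε).le_one _
      _ = _ := by rw [mul_one, mul_assoc, hx2]
  · calc _ ≤ C * ‖a‖ ^ 2 * (ε ^ (((n : ℝ) - 2 * k) / (2 * k)) *
          R ^ ((2 * (k : ℝ) - n) / (2 * k))) * ‖x‖ ^ 2 := by
          gcongr C * ‖a‖ ^ 2 * ?_ * _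
          exact hv.rpow_mul_le hk hnk hε hR hRx
      _ = _ := by ring
end
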